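/- arXiv:1511.07716 — 7 statements merged into one kernel-verified Lean document; each statement's English description precedes it below -/
import Mathlib

section
/- Let D = [a,b] be a closed bounded real interval, g : ℝ → ℝ, and let z₁ < z₂ < ⋯ < z_n be the fixed points of g in D. Let η = min_{1 ≤ i ≤ n−1} (z_{i+1} − z_i) be the resolution of this set, and let d be a constant with 0 < d < η/2. Assume that for each i the interval I_i = [z_i − d, z_i + d] is contained in D, g is Lipschitz on I_i with some constant K_i < 1, and for every x ∈ I_i one has g(x) ∈ D and |g(x) − x| < d. Then there exist ε₁, …, ε_n > 0 such that the closed intervals J_i = [z_i − ε_i, z_i + ε_i] ⊆ I_i are pairwise disjoint, g maps each J_i into itself, and each J_i contains exactly one fixed point of g, namely z_i. -/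
/-! Take `ε i = d`. Since the fixed points are more than `2d` apart, the balls of radius `d`
around them are disjoint and each contains only its own fixed point; and as `g` fixes `z i` and is
a contraction on the ball around it, `|g x - z i| ≤ K |x - z i| ≤ d`, so the ball is invariant. -/

open Metric Set

theorem mapsTo_closedBall_of_fixed {X : Type*} [PseudoMetricSpace X] {g : X → X} {c : X}
    {r K : ℝ} (hc : g c = c) (hK : K ≤ 1)
    (hlip : ∀ x ∈ closedBall c r, dist (g x) (g c) ≤ K * dist x c) :
    MapsTo g (closedBall c r) (closedBall c r) := fun x hx =>
  calc dist (g x) c = dist (g x) (g c) := by rw [hc]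
    _ ≤ K * dist x c := hlip x hx
    _ ≤ 1 * dist x c := by gcongr
    _ ≤ r := by rw [one_mul]; exact hx

section Gaps

variable {n : ℕ} {z : Fin n → ℝ} {δ : ℝ}

theorem lt_sub_of_consecutive_gaps (hmono : Monotone z)
    (hgap : ∀ i : Fin n, ∀ hi : (i : ℕ) + 1 < n, δ < z ⟨(i : ℕ) + 1, hi⟩ - z i)
    {i j : Fin n} (hij : i < j) : δ < z j - z i := by
  have hi : (i : ℕ) + 1 < n := lt_of_le_of_lt hij j.isLt
  have hnext : z ⟨(i : ℕ) + 1, hi⟩ ≤ z j := hmono (Fin.mk_le_of_le_val hij)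
  linarith [hgap i hi]

theorem lt_dist_of_consecutive_gaps (hmono : Monotone z)
    (hgap : ∀ i : Fin n, ∀ hi : (i : ℕ) + 1 < n, δ < z ⟨(i : ℕ) + 1, hi⟩ - z i)
    {i j : Fin n} (hij : i ≠ j) : δ < dist (z i) (z j) := by
  rw [Real.dist_eq]
  rcases hij.lt_or_gt with h | h
  · rw [abs_sub_comm]
    exact (lt_sub_of_consecutive_gaps hmono hgap h).trans_le (le_abs_self _)
  · exact (lt_sub_of_consecutive_gaps hmono hgap h).trans_le (le_abs_self _)

end Gaps

theorem stmt_1_general (a b d : ℝ) (g : ℝ → ℝ) (n : ℕ) (z : Fin n → ℝ)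
    (hmono : StrictMono z)
    (hfixset : {x | x ∈ Set.Icc a b ∧ g x = x} = Set.range z)
    (hd : 0 < d)
    (hres : ∀ i : Fin n, ∀ hi : (i : ℕ) + 1 < n, 2 * d < z ⟨(i : ℕ) + 1, hi⟩ - z i)
    (hI : ∀ i, Set.Icc (z i - d) (z i + d) ⊆ Set.Icc a b)
    (hlip : ∀ i, ∃ K, 0 ≤ K ∧ K < 1 ∧ ∀ x ∈ Set.Icc (z i - d) (z i + d),
      ∀ y ∈ Set.Icc (z i - d) (z i + d), |g x - g y| ≤ K * |x - y|) :
    ∃ ε : Fin n → ℝ, (∀ i, 0 < ε i) ∧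
      (∀ i, Set.Icc (z i - ε i) (z i + ε i) ⊆ Set.Icc (z i - d) (z i + d)) ∧
      (∀ i j, i ≠ j →
        Disjoint (Set.Icc (z i - ε i) (z i + ε i)) (Set.Icc (z j - ε j) (z j + ε j))) ∧
      (∀ i, Set.MapsTo g (Set.Icc (z i - ε i) (z i + ε i)) (Set.Icc (z i - ε i) (z i + ε i))) ∧
      (∀ i, ∀ x ∈ Set.Icc (z i - ε i) (z i + ε i), (g x = x ↔ x = z i)) := by
  have hfix : ∀ i, g (z i) = z i := fun i => ((hfixset.symm ▸ mem_range_self i :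
    z i ∈ {x | x ∈ Icc a b ∧ g x = x})).2
  have hsep : ∀ i j, i ≠ j → d + d < dist (z i) (z j) := fun i j hij => by
    simpa only [two_mul] using lt_dist_of_consecutive_gaps hmono.monotone hres hij
  simp only [← Real.closedBall_eq_Icc] at hI hlip ⊢
  refine ⟨fun _ => d, fun _ => hd, fun _ => subset_rfl,
    fun i j hij => closedBall_disjoint_closedBall (hsep i j hij), fun i => ?_, fun i x hx => ?_⟩
  · obtain ⟨K, -, hK, hKlip⟩ := hlip i
    exact mapsTo_closedBall_of_fixed (hfix i) hK.le
      fun x hx => hKlip x hx (z i) (mem_closedBall_self hd.le)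
  · refine ⟨fun hgx => ?_, fun hxi => hxi ▸ hfix i⟩
    obtain ⟨j, rfl⟩ : x ∈ range z := hfixset ▸ ⟨hI i hx, hgx⟩
    by_contra hji
    linarith [hsep j i fun h => hji (congrArg z h), mem_closedBall.mp hx]

/-- Proposition 2.4: separation of all fixed points via the predicate ℙ₀
with vertical displacement `d` smaller than half the resolution. -/
theorem stmt_1 (a b d : ℝ) (g : ℝ → ℝ) (n : ℕ) (z : Fin n → ℝ)
    (hmono : StrictMono z)
    (hfixset : {x | x ∈ Set.Icc a b ∧ g x = x} = Set.range z)
    (hd : 0 < d)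
    (hres : ∀ i : Fin n, ∀ hi : (i : ℕ) + 1 < n, 2 * d < z ⟨(i : ℕ) + 1, hi⟩ - z i)
    (hI : ∀ i, Set.Icc (z i - d) (z i + d) ⊆ Set.Icc a b)
    (hlip : ∀ i, ∃ K, 0 ≤ K ∧ K < 1 ∧ ∀ x ∈ Set.Icc (z i - d) (z i + d),
      ∀ y ∈ Set.Icc (z i - d) (z i + d), |g x - g y| ≤ K * |x - y|)
    (hP0 : ∀ i, ∀ x ∈ Set.Icc (z i - d) (z i + d), g x ∈ Set.Icc a b ∧ |g x - x| < d) :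
    ∃ ε : Fin n → ℝ, (∀ i, 0 < ε i) ∧
      (∀ i, Set.Icc (z i - ε i) (z i + ε i) ⊆ Set.Icc (z i - d) (z i + d)) ∧
      (∀ i j, i ≠ j →
        Disjoint (Set.Icc (z i - ε i) (z i + ε i)) (Set.Icc (z j - ε j) (z j + ε j))) ∧
      (∀ i, Set.MapsTo g (Set.Icc (z i - ε i) (z i + ε i)) (Set.Icc (z i - ε i) (z i + ε i))) ∧
      (∀ i, ∀ x ∈ Set.Icc (z i - ε i) (z i + ε i), (g x = x ↔ x = z i)) :=
  stmt_1_general a b d g n z hmono hfixset hd hres hI hlip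
end

section
/- Let g : ℝ → ℝ, let z be a fixed point of g (g(z) = z), and let ε > 0 be such that g is continuously differentiable on the interval X_z = [z−ε, z+ε], with |g′(z)| ≠ 1. Assume that for every x ∈ X_z with g(x) ≠ x one has |g(g(x)) − g(x)| ≤ |g(x) − x|. Then there exist μ with 0 < μ ≤ ε and a constant L with 0 ≤ L < 1 such that |g′(x)| ≤ L for all x in the interval [z−μ, z+μ]; in particular g is contractive on [z−μ, z+μ]. -/
/-! If `|g' z| > 1`, then near `z` the map expands distances by a factor `c > 1`, so every
point `x ≠ z` close enough to `z` is moved (`|g x - z| ≥ c |x - z|`) and its step is enlarged: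
`|g (g x) - g x| ≥ c |g x - x| > |g x - x|`, violating the slope predicate. Hence `|g' z| < 1`,
continuity of `g'` bounds `|g'|` by some `L < 1` near `z`, and the mean value inequality
makes `g` contractive there. -/

open Set Filter Topology Metric

theorem Convex.mul_abs_sub_le_abs_image_sub {f f' : ℝ → ℝ} {s : Set ℝ} {c : ℝ}
    (hs : Convex ℝ s) (hf : ∀ x ∈ s, HasDerivAt f (f' x) x) (hc : ∀ x ∈ s, c ≤ |f' x|)
    {x y : ℝ} (hx : x ∈ s) (hy : y ∈ s) : c * |y - x| ≤ |f y - f x| := by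
  wlog hxy : x < y generalizing x y
  · rcases (not_lt.1 hxy).eq_or_lt with rfl | hyx
    · simp
    · simpa only [abs_sub_comm] using this hy hx hyx
  have hsub : Icc x y ⊆ s := hs.ordConnected.out hx hy
  obtain ⟨ξ, hξ, hslope⟩ := exists_hasDerivAt_eq_slope f f' hxy
    (fun u hu => (hf u (hsub hu)).continuousAt.continuousWithinAt)
    (fun u hu => hf u (hsub (Ioo_subset_Icc_self hu)))
  rw [eq_div_iff (sub_ne_zero.2 hxy.ne')] at hslope
  rw [← hslope, abs_mul]
  exact mul_le_mul_of_nonneg_right (hc ξ (hsub (Ioo_subset_Icc_self hξ))) (abs_nonneg _)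

theorem frequently_abs_sub_lt_abs_sub_of_one_lt_abs_deriv {g g' : ℝ → ℝ} {z : ℝ}
    (hfix : g z = z) (hderiv : ∀ᶠ x in 𝓝 z, HasDerivAt g (g' x) x)
    (hcont : ContinuousAt g' z) (hrep : 1 < |g' z|) :
    ∃ᶠ x in 𝓝 z, g x ≠ x ∧ |g x - x| < |g (g x) - g x| := by
  obtain ⟨c, hc1, hcz⟩ := exists_between hrep
  have hnear : ∀ᶠ x in 𝓝 z, HasDerivAt g (g' x) x ∧ c < |g' x| :=
    hderiv.and (hcont.abs.eventually (lt_mem_nhds hcz))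
  obtain ⟨δ, hδ, hball⟩ := nhds_basis_closedBall.eventually_iff.1 hnear
  have hexpand : ∀ x ∈ closedBall z δ, ∀ y ∈ closedBall z δ, c * |y - x| ≤ |g y - g x| :=
    fun x hx y hy => (convex_closedBall z δ).mul_abs_sub_le_abs_image_sub
      (fun u hu => (hball hu).1) (fun u hu => (hball hu).2.le) hx hy
  have hgz : Tendsto g (𝓝 z) (𝓝 z) := by
    simpa only [hfix] using hderiv.self_of_nhds.continuousAt.tendsto
  have hstay : ∀ᶠ x in 𝓝 z, x ∈ closedBall z δ ∧ g x ∈ closedBall z δ :=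
    Eventually.and (closedBall_mem_nhds z hδ) (hgz.eventually (closedBall_mem_nhds z hδ))
  have hpunct : ∀ᶠ x in 𝓝[≠] z, (x ∈ closedBall z δ ∧ g x ∈ closedBall z δ) ∧ x ≠ z :=
    (eventually_nhdsWithin_of_eventually_nhds hstay).and self_mem_nhdsWithin
  refine (hpunct.frequently.filter_mono nhdsWithin_le_nhds).mono ?_
  rintro x ⟨⟨hxB, hgxB⟩, hxz⟩
  have hmoved : g x ≠ x := by
    intro hgx
    have hxz' : 0 < |x - z| := abs_pos.2 (sub_ne_zero.2 hxz)
    have := hexpand z (mem_closedBall_self hδ.le) x hxB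
    rw [hgx, hfix] at this
    exact (lt_mul_left hxz' hc1).not_ge this
  refine ⟨hmoved, ?_⟩
  calc |g x - x| < c * |g x - x| := lt_mul_left (abs_pos.2 (sub_ne_zero.2 hmoved)) hc1
    _ ≤ |g (g x) - g x| := hexpand x hxB (g x) hgxB

theorem exists_forall_Icc_of_eventually {P : ℝ → Prop} {z ε : ℝ} (h : ∀ᶠ x in 𝓝 z, P x)
    (hε : 0 < ε) : ∃ μ, 0 < μ ∧ μ ≤ ε ∧ ∀ x ∈ Icc (z - μ) (z + μ), P x := by
  obtain ⟨δ, hδ, hP⟩ := nhds_basis_closedBall.eventually_iff.1 h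
  refine ⟨min δ ε, lt_min hδ hε, min_le_right _ _, fun x hx => hP ?_⟩
  rw [Real.closedBall_eq_Icc]
  exact Icc_subset_Icc (by linarith [min_le_left δ ε]) (by linarith [min_le_left δ ε]) hx

/-- Lemma 2.5(i): the slope predicate ℙ₁ near a non-neutral fixed point
forces local contractivity. -/
theorem stmt_2 (g g' : ℝ → ℝ) (z ε : ℝ) (hε : 0 < ε) (hfix : g z = z)
    (hderiv : ∀ x ∈ Set.Icc (z - ε) (z + ε), HasDerivAt g (g' x) x)
    (hcont : ContinuousOn g' (Set.Icc (z - ε) (z + ε)))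
    (hne : |g' z| ≠ 1)
    (hP1 : ∀ x ∈ Set.Icc (z - ε) (z + ε), g x ≠ x → |g (g x) - g x| ≤ |g x - x|) :
    ∃ μ, 0 < μ ∧ μ ≤ ε ∧ ∃ L, 0 ≤ L ∧ L < 1 ∧
      (∀ x ∈ Set.Icc (z - μ) (z + μ), |g' x| ≤ L) ∧
      (∀ x ∈ Set.Icc (z - μ) (z + μ), ∀ y ∈ Set.Icc (z - μ) (z + μ),
        |g x - g y| ≤ L * |x - y|) := by
  have hX : Icc (z - ε) (z + ε) ∈ 𝓝 z := Icc_mem_nhds (by linarith) (by linarith)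
  have hg'z : ContinuousAt g' z := hcont.continuousAt hX
  have hattr : |g' z| < 1 := by
    refine hne.lt_of_le (not_lt.1 fun hrep => ?_)
    obtain ⟨x, ⟨hmoved, hgrow⟩, hx⟩ := ((frequently_abs_sub_lt_abs_sub_of_one_lt_abs_deriv hfix
      (eventually_of_mem hX hderiv) hg'z hrep).and_eventually hX).exists
    exact (hP1 x hx hmoved).not_gt hgrow
  obtain ⟨L, hzL, hL1⟩ := exists_between hattr
  obtain ⟨μ, hμ, hμε, hbound⟩ :=
    exists_forall_Icc_of_eventually (hg'z.abs.eventually (gt_mem_nhds hzL)) hε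
  have hsub : Icc (z - μ) (z + μ) ⊆ Icc (z - ε) (z + ε) :=
    Icc_subset_Icc (by linarith) (by linarith)
  refine ⟨μ, hμ, hμε, L, (abs_nonneg _).trans hzL.le, hL1, fun x hx => (hbound x hx).le,
    fun x hx y hy => ?_⟩
  exact (convex_Icc _ _).norm_image_sub_le_of_norm_hasDerivWithin_le
    (fun u hu => (hderiv u (hsub hu)).hasDerivWithinAt) (fun u hu => (hbound u hu).le) hy hx
end

section
/- Let g : ℝ → ℝ be continuously differentiable on a neighborhood of a point z with g(z) = z and g′(z) ≠ 1. Then the quotient q(x) = (g(g(x)) − g(x)) / (g(x) − x), which is well defined for all x ≠ z sufficiently close to z (since g(x) ≠ x for such x), tends to g′(z) as x → z with x ≠ z. -/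
/-!
On a small punctured neighbourhood of the fixed point `z`, the quotient
`(g (g x) - g x) / (g x - x)` is the slope of `g` between the two points `x` and `g x`, both of
which tend to `z`. Since `g` is `C¹`, it is strictly differentiable at `z`, and for a strictly
differentiable function such two-point slopes converge to the derivative. That `g x ≠ x` near `z`
comes from `g - id` having the nonzero derivative `g' z - 1` at `z`.
-/

open Filter Topology

section StrictSlope

variable {𝕜 F : Type*} [NontriviallyNormedField 𝕜] [NormedAddCommGroup F] [NormedSpace 𝕜 F]
  {f : 𝕜 → F} {f' : F}

theorem HasDerivAtFilter.tendsto_slope {L : Filter (𝕜 × 𝕜)} (h : HasDerivAtFilter f f' L) :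
    Tendsto (fun p => slope f p.2 p.1) (L ⊓ 𝓟 {p | p.1 ≠ p.2}) (𝓝 f') := by
  rw [hasDerivAtFilter_iff_tendsto] at h
  rw [tendsto_iff_norm_sub_tendsto_zero]
  refine (h.mono_left inf_le_left).congr' ?_
  filter_upwards [mem_inf_of_right (mem_principal_self _)] with p hp
  have hp' : p.1 - p.2 ≠ 0 := sub_ne_zero.2 hp
  conv_rhs => rw [slope_def_module, ← inv_smul_smul₀ hp' f', ← smul_sub, norm_smul, norm_inv]

theorem HasStrictDerivAt.tendsto_slope {α : Type*} {l : Filter α} {a : 𝕜} {u v : α → 𝕜}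
    (h : HasStrictDerivAt f f' a) (hu : Tendsto u l (𝓝 a)) (hv : Tendsto v l (𝓝 a))
    (huv : ∀ᶠ x in l, u x ≠ v x) :
    Tendsto (fun x => slope f (u x) (v x)) l (𝓝 f') :=
  HasDerivAtFilter.tendsto_slope h |>.comp <|
    tendsto_inf.2 ⟨hv.prodMk_nhds hu, tendsto_principal.2 (huv.mono fun _ hx => hx.symm)⟩

end StrictSlope

theorem HasDerivAt.eventually_ne_self {𝕜 : Type*} [NontriviallyNormedField 𝕜] {g : 𝕜 → 𝕜}
    {g' z : 𝕜} (h : HasDerivAt g g' z) (hne : g' ≠ 1) : ∀ᶠ x in 𝓝[≠] z, g x ≠ x :=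
  ((h.sub (hasDerivAt_id z)).eventually_ne (c := 0) (sub_ne_zero.2 hne)).mono
    fun _ hx => sub_ne_zero.1 hx

/-- The L'Hôpital computation in the proof of Lemma 2.5: near a fixed point `z`
with `g'(z) ≠ 1`, `g x ≠ x` for `x ≠ z` close to `z`, and
`(g(g x) - g x)/(g x - x) → g'(z)` as `x → z`, `x ≠ z`. -/
theorem stmt_4 (g g' : ℝ → ℝ) (z ε : ℝ) (hε : 0 < ε)
    (hderiv : ∀ x ∈ Metric.ball z ε, HasDerivAt g (g' x) x)
    (hcont : ContinuousOn g' (Metric.ball z ε))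
    (hfix : g z = z) (hne : g' z ≠ 1) :
    (∀ᶠ x in nhdsWithin z {z}ᶜ, g x ≠ x) ∧
      Filter.Tendsto (fun x => (g (g x) - g x) / (g x - x)) (nhdsWithin z {z}ᶜ)
        (nhds (g' z)) := by
  have hball : Metric.ball z ε ∈ 𝓝 z := Metric.ball_mem_nhds z hε
  have hstrict : HasStrictDerivAt g (g' z) z :=
    hasStrictDerivAt_of_hasDerivAt_of_continuousAt (eventually_of_mem hball hderiv)
      (hcont.continuousAt hball)
  have hmoved : ∀ᶠ x in 𝓝[≠] z, g x ≠ x := hstrict.hasDerivAt.eventually_ne_self hne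
  have hgz : Tendsto g (𝓝[≠] z) (𝓝 z) := by
    simpa only [hfix] using hstrict.hasDerivAt.continuousAt.tendsto.mono_left nhdsWithin_le_nhds
  refine ⟨hmoved, ?_⟩
  simpa only [slope_def_field] using
    hstrict.tendsto_slope (u := fun x => x) (tendsto_id.mono_left nhdsWithin_le_nhds) hgz
      (hmoved.mono fun _ hx => hx.symm)
end

section
/- Let D = [a,b] be a closed bounded real interval, g : ℝ → ℝ, and let z₁ < z₂ < ⋯ < z_n be the fixed points of g in D. Suppose that for each i there exists ε_i > 0 such that X_i = [z_i − ε_i, z_i + ε_i] ⊆ D, g is continuously differentiable on X_i with |g′(z_i)| ≠ 1, and |g(g(x)) − g(x)| ≤ |g(x) − x| for every x ∈ X_i with g(x) ≠ x. Then there exists δ > 0 such that the intervals K_i = [z_i − δ, z_i + δ] are pairwise disjoint and contained in D, g maps each K_i into itself, and each K_i contains exactly one fixed point of g, namely z_i. -/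
/-! Near a fixed point `z` with `g'(z) = c`, both `g x - x` and `g (g x) - g x` are
asymptotic to multiples of `x - z`, namely `(c - 1)(x - z)` and `c (c - 1)(x - z)`. So ℙ₁
forces `|c| ≤ 1`, hence `|c| < 1`, and then `|g x - z| ≤ k |x - z|` for some `k < 1` on a
small ball around `z`: every such ball is mapped into itself and contains no other fixed
point. A common radius below half the gaps between the `z i` does the rest. -/

open Filter Metric Set Topology

section FixedPointContraction

variable {α : Type*} [MetricSpace α] {g : α → α} {z : α} {k δ : ℝ}

theorem mapsTo_closedBall_of_dist_le_mul (hk : k ≤ 1)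
    (h : ∀ x ∈ closedBall z δ, dist (g x) z ≤ k * dist x z) :
    MapsTo g (closedBall z δ) (closedBall z δ) := fun x hx =>
  calc dist (g x) z ≤ k * dist x z := h x hx
    _ ≤ 1 * dist x z := by gcongr
    _ ≤ δ := by rw [one_mul]; exact hx

theorem eq_of_isFixedPt_of_dist_le_mul (hk : k < 1)
    (h : ∀ x ∈ closedBall z δ, dist (g x) z ≤ k * dist x z) {x : α}
    (hx : x ∈ closedBall z δ) (hfx : g x = x) : x = z := by
  have := h x hx
  rw [hfx] at this
  exact dist_le_zero.1 (by nlinarith [dist_nonneg (x := x) (y := z)])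

end FixedPointContraction

section SlopePredicate

variable {g : ℝ → ℝ} {c z : ℝ}

theorem slope_sub_one_eq_div_of_fixed (hz : g z = z) (x : ℝ) (hx : x ≠ z) :
    slope g z x - 1 = (g x - x) / (x - z) := by
  rw [slope_def_field, hz]
  field_simp [sub_ne_zero.2 hx]
  ring

theorem eventually_dist_le_mul_of_hasDerivAt (hg : HasDerivAt g c z) (hz : g z = z)
    {k : ℝ} (hk : |c| < k) : ∀ᶠ x in 𝓝 z, dist (g x) z ≤ k * dist x z := by
  have hslope := (hasDerivAt_iff_tendsto_slope.1 hg).abs.eventually_lt tendsto_const_nhds hk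
  filter_upwards [eventually_nhdsWithin_iff.1 hslope] with x hx
  rcases eq_or_ne x z with rfl | hxz
  · simp [hz]
  · have hpos : 0 < |x - z| := abs_pos.2 (sub_ne_zero.2 hxz)
    have := hx hxz
    rw [slope_def_field, hz, abs_div, div_lt_iff₀ hpos] at this
    rw [Real.dist_eq, Real.dist_eq]
    exact this.le

theorem abs_le_one_of_hasDerivAt_of_slopePred (hg : HasDerivAt g c z) (hz : g z = z)
    (hP : ∀ᶠ x in 𝓝 z, g x ≠ x → |g (g x) - g x| ≤ |g x - x|) : |c| ≤ 1 := by
  by_contra! hc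
  have hc1 : c - 1 ≠ 0 := sub_ne_zero.2 fun h => by simp [h] at hc
  have hgg : HasDerivAt (g ∘ g) (c * c) z := (hz.symm ▸ hg : HasDerivAt g c (g z)).comp z hg
  have hlt : |c - 1| < |c * c - c| := by
    rw [show c * c - c = c * (c - 1) by ring, abs_mul]
    exact lt_mul_of_one_lt_left (abs_pos.2 hc1) hc
  have hT1 := ((hasDerivAt_iff_tendsto_slope.1 hg).sub_const 1).abs
  have hT2 := ((hasDerivAt_iff_tendsto_slope.1 hgg).sub (hasDerivAt_iff_tendsto_slope.1 hg)).abs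
  obtain ⟨x, hx, hxz, hPx⟩ := ((hT1.eventually_lt hT2 hlt).and
    (eventually_mem_nhdsWithin.and (nhdsWithin_le_nhds hP))).exists
  have hpos : 0 < |x - z| := abs_pos.2 (sub_ne_zero.2 hxz)
  have hgg' : slope (g ∘ g) z x - slope g z x = (g (g x) - g x) / (x - z) := by
    simp only [slope_def_field, Function.comp, hz]
    ring
  rw [slope_sub_one_eq_div_of_fixed hz x hxz, hgg', abs_div, abs_div,
    div_lt_div_iff_of_pos_right hpos] at hx
  have hne : g x ≠ x := fun h => by simp [h] at hx
  exact (hPx hne).not_gt hx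

end SlopePredicate

theorem stmt_5_general (a b : ℝ) (g g' : ℝ → ℝ) (n : ℕ) (z : Fin n → ℝ) (ε : Fin n → ℝ)
    (hmono : StrictMono z)
    (hfixset : {x | x ∈ Set.Icc a b ∧ g x = x} = Set.range z)
    (hε : ∀ i, 0 < ε i)
    (hX : ∀ i, Set.Icc (z i - ε i) (z i + ε i) ⊆ Set.Icc a b)
    (hderiv : ∀ i, ∀ x ∈ Set.Icc (z i - ε i) (z i + ε i), HasDerivAt g (g' x) x)
    (hne : ∀ i, |g' (z i)| ≠ 1)
    (hP1 : ∀ i, ∀ x ∈ Set.Icc (z i - ε i) (z i + ε i), g x ≠ x →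
      |g (g x) - g x| ≤ |g x - x|) :
    ∃ δ > 0,
      (∀ i, Set.Icc (z i - δ) (z i + δ) ⊆ Set.Icc a b) ∧
      (∀ i j, i ≠ j →
        Disjoint (Set.Icc (z i - δ) (z i + δ)) (Set.Icc (z j - δ) (z j + δ))) ∧
      (∀ i, Set.MapsTo g (Set.Icc (z i - δ) (z i + δ)) (Set.Icc (z i - δ) (z i + δ))) ∧
      (∀ i, ∀ x ∈ Set.Icc (z i - δ) (z i + δ), (g x = x ↔ x = z i)) := by
  have hfix (i) : g (z i) = z i :=
    (show z i ∈ {x | x ∈ Icc a b ∧ g x = x} from hfixset ▸ ⟨i, rfl⟩).2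
  have hXnhds (i) : Icc (z i - ε i) (z i + ε i) ∈ 𝓝 (z i) :=
    Icc_mem_nhds (by linarith [hε i]) (by linarith [hε i])
  have hcontr (i) : ∃ k < 1, ∀ᶠ x in 𝓝 (z i), dist (g x) (z i) ≤ k * dist x (z i) := by
    have hgz := hderiv i (z i) (mem_of_mem_nhds (hXnhds i))
    have hle := abs_le_one_of_hasDerivAt_of_slopePred hgz (hfix i)
      (Filter.mem_of_superset (hXnhds i) (hP1 i))
    obtain ⟨k, hck, hk1⟩ := exists_between (hle.lt_of_ne (hne i))
    exact ⟨k, hk1, eventually_dist_le_mul_of_hasDerivAt hgz (hfix i) hck⟩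
  choose k hk1 hk using hcontr
  have hsep (i j) (hij : i ≠ j) : ∀ᶠ δ in 𝓝 (0 : ℝ), δ + δ < dist (z i) (z j) := by
    filter_upwards [eventually_lt_nhds (half_pos (dist_pos.2 (hmono.injective.ne hij)))]
      with δ hδ
    linarith
  have hsmall : ∀ᶠ δ in 𝓝 (0 : ℝ),
      (∀ i, closedBall (z i) δ ⊆
        {x | dist (g x) (z i) ≤ k i * dist x (z i)} ∩ Icc (z i - ε i) (z i + ε i)) ∧
      ∀ i j, i ≠ j → δ + δ < dist (z i) (z j) :=
    (eventually_all.2 fun i => eventually_closedBall_subset (inter_mem (hk i) (hXnhds i))).and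
      (eventually_all.2 fun i => eventually_all.2 fun j => eventually_imp_distrib_left.2 (hsep i j))
  obtain ⟨δ, ⟨hball, hδsep⟩, hδ⟩ :=
    ((hsmall.filter_mono nhdsWithin_le_nhds).and (eventually_mem_nhdsWithin (s := Ioi 0))).exists
  simp only [← Real.closedBall_eq_Icc]
  refine ⟨δ, hδ, fun i => (hball i).trans (inter_subset_right.trans (hX i)),
    fun i j hij => closedBall_disjoint_closedBall (hδsep i j hij),
    fun i => mapsTo_closedBall_of_dist_le_mul (hk1 i).le fun x hx => (hball i hx).1,
    fun i x hx => ⟨eq_of_isFixedPt_of_dist_le_mul (hk1 i) (fun y hy => (hball i hy).1) hx,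
      fun h => h ▸ hfix i⟩⟩

/-- Proposition 2.6: the map educated by the slope predicate ℙ₁ separates all the
fixed points of `g` in `D = [a,b]`. -/
theorem stmt_5 (a b : ℝ) (g g' : ℝ → ℝ) (n : ℕ) (z : Fin n → ℝ) (ε : Fin n → ℝ)
    (hmono : StrictMono z)
    (hfixset : {x | x ∈ Set.Icc a b ∧ g x = x} = Set.range z)
    (hε : ∀ i, 0 < ε i)
    (hX : ∀ i, Set.Icc (z i - ε i) (z i + ε i) ⊆ Set.Icc a b)
    (hderiv : ∀ i, ∀ x ∈ Set.Icc (z i - ε i) (z i + ε i), HasDerivAt g (g' x) x)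
    (hcont : ∀ i, ContinuousOn g' (Set.Icc (z i - ε i) (z i + ε i)))
    (hne : ∀ i, |g' (z i)| ≠ 1)
    (hP1 : ∀ i, ∀ x ∈ Set.Icc (z i - ε i) (z i + ε i), g x ≠ x →
      |g (g x) - g x| ≤ |g x - x|) :
    ∃ δ > 0,
      (∀ i, Set.Icc (z i - δ) (z i + δ) ⊆ Set.Icc a b) ∧
      (∀ i j, i ≠ j →
        Disjoint (Set.Icc (z i - δ) (z i + δ)) (Set.Icc (z j - δ) (z j + δ))) ∧
      (∀ i, Set.MapsTo g (Set.Icc (z i - δ) (z i + δ)) (Set.Icc (z i - δ) (z i + δ))) ∧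
      (∀ i, ∀ x ∈ Set.Icc (z i - δ) (z i + δ), (g x = x ↔ x = z i)) :=
  stmt_5_general a b g g' n z ε hmono hfixset hε hX hderiv hne hP1
end

section
/- Let k be a positive integer, let p_i denote the i-th prime number, let f_k(x) = ∏_{i=1}^{k} sin(xπ/p_i), and let I_k = [3/2, p_k² + 1/3]. Define Ψ_k : ℝ → ℝ by Ψ_k(x) = ⌊x⌉ if f_k(⌊x⌉) = 0 and Ψ_k(x) = 0 otherwise, where ⌊x⌉ denotes the integer closest to x. Then for every x ∈ I_k, Ψ_k(x) = x if and only if f_k(x) = 0; that is, the fixed points of Ψ_k in I_k are exactly the zeros of f_k in I_k. -/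
/-! Every zero of `f_k` is a multiple of some prime `p_i`, hence an integer, so it is fixed by
rounding; conversely a fixed point of `Ψ_k` in `I_k` is nonzero, so it must equal `⌊x⌉`, a zero
of `f_k`. -/

open Real

theorem exists_intCast_eq_of_sin_mul_pi_div_eq_zero {x : ℝ} {q : ℕ} (hq : q ≠ 0)
    (h : sin (x * π / q) = 0) : ∃ n : ℤ, (n : ℝ) = x := by
  obtain ⟨m, hm⟩ := sin_eq_zero_iff.mp h
  refine ⟨m * q, ?_⟩
  rw [eq_div_iff (by exact_mod_cast hq)] at hm
  push_cast
  exact mul_right_cancel₀ pi_ne_zero (by linarith)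

theorem exists_intCast_eq_of_prod_sin_mul_pi_div_eq_zero {ι : Type*} {s : Finset ι}
    {q : ι → ℕ} (hq : ∀ i ∈ s, q i ≠ 0) {x : ℝ} (h : ∏ i ∈ s, sin (x * π / q i) = 0) :
    ∃ n : ℤ, (n : ℝ) = x := by
  obtain ⟨i, hi, hsin⟩ := Finset.prod_eq_zero_iff.mp h
  exact exists_intCast_eq_of_sin_mul_pi_div_eq_zero (hq i hi) hsin

theorem ite_round_eq_self_iff {Z : ℝ → Prop} {x : ℝ} [Decidable (Z (round x))] (hx : x ≠ 0)
    (hZ : Z x → ∃ n : ℤ, (n : ℝ) = x) :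
    (if Z (round x) then (round x : ℝ) else 0) = x ↔ Z x := by
  constructor
  · intro h
    split_ifs at h with hround
    · exact h ▸ hround
    · exact absurd h.symm hx
  · intro hzero
    obtain ⟨n, hn⟩ := hZ hzero
    have hround : (round x : ℝ) = x := by rw [← hn, round_intCast]
    rw [if_pos (by rwa [hround]), hround]

open Classical in
theorem stmt_10_general (k : ℕ) :
    ∀ x ∈ Set.Icc (3 / 2 : ℝ) ((Nat.nth Nat.Prime (k - 1) : ℝ) ^ 2 + 1 / 3),
      ((if (∏ i ∈ Finset.range k,
            Real.sin ((round x : ℝ) * Real.pi / (Nat.nth Nat.Prime i : ℝ))) = 0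
          then (round x : ℝ) else 0) = x ↔
        (∏ i ∈ Finset.range k, Real.sin (x * Real.pi / (Nat.nth Nat.Prime i : ℝ))) = 0) := by
  intro x hx
  have hx0 : x ≠ 0 := by linarith [hx.1]
  exact ite_round_eq_self_iff (Z := fun y => ∏ i ∈ Finset.range k,
      sin (y * π / (Nat.nth Nat.Prime i : ℝ)) = 0) hx0
    (exists_intCast_eq_of_prod_sin_mul_pi_div_eq_zero fun i _ => (Nat.prime_nth_prime i).ne_zero)

open Classical in
/-- Proposition 3.3(i)-(ii): the fixed points of the step map
`Ψ_k(x) = ⌊x⌉ if f_k(⌊x⌉) = 0, else 0` in `I_k = [3/2, p_k² + 1/3]` are exactly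
the zeros of the k-th Pruitt function `f_k` in `I_k`.
Here `p_k = Nat.nth Nat.Prime (k-1)` and `round x` is the closest integer. -/
theorem stmt_10 (k : ℕ) (hk : 0 < k) :
    ∀ x ∈ Set.Icc (3 / 2 : ℝ) ((Nat.nth Nat.Prime (k - 1) : ℝ) ^ 2 + 1 / 3),
      ((if (∏ i ∈ Finset.range k,
            Real.sin ((round x : ℝ) * Real.pi / (Nat.nth Nat.Prime i : ℝ))) = 0
          then (round x : ℝ) else 0) = x ↔
        (∏ i ∈ Finset.range k, Real.sin (x * Real.pi / (Nat.nth Nat.Prime i : ℝ))) = 0) :=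
  stmt_10_general k
end

section
/- Let k be a positive integer, let p_i denote the i-th prime number, and let f_k(x) = ∏_{i=1}^{k} sin(xπ/p_i). Let n be an integer and let m be the number of indices i with 1 ≤ i ≤ k such that p_i divides n. Then the j-th derivative of f_k vanishes at n for every j with 0 ≤ j < m, and the m-th derivative of f_k at n is nonzero; that is, f_k has a zero of order exactly m at n (with m = 0 meaning f_k(n) ≠ 0). -/
/-!
Near an integer `n`, each factor `sin (x π / p)` is either nonzero at `n` or, when `p ∣ n`, has a
simple zero there, so it equals `(x - n) ^ e * g x` with `e ∈ {0, 1}` and `g` analytic with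
`g n ≠ 0` (take `g = dslope` of the factor at `n`). Multiplying, `f_k x = (x - n) ^ m * G x` with
`G` analytic and `G n ≠ 0`; differentiating this factorization, the derivatives of order
`j < m` vanish at `n` while the `m`-th one is `m! * G n`.
-/

open Real
open scoped Nat

section Order

variable {𝕜 : Type*} [NontriviallyNormedField 𝕜]

theorem analyticAt_dslope {E : Type*} [NormedAddCommGroup E] [NormedSpace 𝕜 E] {f : 𝕜 → E}
    {a b : 𝕜} (ha : AnalyticAt 𝕜 f a) (hb : AnalyticAt 𝕜 f b) :
    AnalyticAt 𝕜 (dslope f a) b := by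
  rcases eq_or_ne b a with rfl | hba
  · obtain ⟨p, hp⟩ := ha
    exact hp.has_fpower_series_dslope_fslope.analyticAt
  · refine AnalyticAt.congr ?_ (dslope_eventuallyEq_slope_of_ne f hba).symm
    have hinv : AnalyticAt 𝕜 (fun z => (z - a)⁻¹) b :=
      (analyticAt_id.sub analyticAt_const).inv (sub_ne_zero.mpr hba)
    simp only [slope_fun_def, vsub_eq_sub]
    exact hinv.smul (hb.sub analyticAt_const)

theorem exists_eq_pow_sub_mul_of_deriv_ne_zero {f : 𝕜 → 𝕜} (hf : ∀ z, AnalyticAt 𝕜 f z)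
    (z₀ : 𝕜) (hf' : f z₀ = 0 → deriv f z₀ ≠ 0) [Decidable (f z₀ = 0)] :
    ∃ g : 𝕜 → 𝕜, (∀ z, AnalyticAt 𝕜 g z) ∧ g z₀ ≠ 0 ∧
      ∀ z, f z = (z - z₀) ^ (if f z₀ = 0 then 1 else 0) * g z := by
  by_cases h₀ : f z₀ = 0
  · refine ⟨dslope f z₀, fun z => analyticAt_dslope (hf z₀) (hf z), ?_, fun z => ?_⟩
    · rw [dslope_same]; exact hf' h₀
    · simpa [h₀] using (sub_smul_dslope_of_zero h₀ z).symm
  · exact ⟨f, hf, h₀, fun z => by simp [h₀]⟩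

variable [CharZero 𝕜] [CompleteSpace 𝕜]

theorem iteratedDeriv_eq_zero_and_factorial_of_eq_pow_sub_mul {m : ℕ} {z₀ : 𝕜} {f g : 𝕜 → 𝕜}
    (hg : ∀ z, AnalyticAt 𝕜 g z) (hfg : ∀ z, f z = (z - z₀) ^ m * g z) :
    (∀ j < m, iteratedDeriv j f z₀ = 0) ∧ iteratedDeriv m f z₀ = m ! * g z₀ := by
  refine ⟨fun j hj => ?_, ?_⟩
  · obtain ⟨h, -, hf⟩ := iteratedDeriv_mul_pow_sub_of_analytic (k := j) (t := m - j) hg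
      (by rwa [Nat.add_sub_cancel' hj.le])
    simp [hf, Nat.sub_ne_zero_of_lt hj]
  · obtain ⟨h, -, hf⟩ := iteratedDeriv_mul_pow_sub_of_analytic (k := m) (t := 0) hg hfg
    simp [hf]

end Order

theorem sin_int_mul_pi_div_eq_zero_iff {p : ℕ} (hp : p ≠ 0) (n : ℤ) :
    sin (n * π / p) = 0 ↔ (p : ℤ) ∣ n := by
  have hpR : (p : ℝ) ≠ 0 := Nat.cast_ne_zero.mpr hp
  rw [sin_eq_zero_iff]
  constructor
  · rintro ⟨q, hq⟩
    refine ⟨q, ?_⟩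
    have : (n : ℝ) = p * q := by
      field_simp at hq
      linarith [pi_pos]
    exact_mod_cast this
  · rintro ⟨q, rfl⟩
    exact ⟨q, by push_cast; field_simp⟩

theorem exists_sin_mul_pi_div_eq_pow_sub_mul {p : ℕ} (hp : p ≠ 0) (n : ℤ) :
    ∃ g : ℝ → ℝ, (∀ x, AnalyticAt ℝ g x) ∧ g n ≠ 0 ∧
      ∀ x, sin (x * π / p) = (x - n) ^ (if (p : ℤ) ∣ n then 1 else 0) * g x := by
  have hc : π / p ≠ 0 := div_ne_zero pi_ne_zero (Nat.cast_ne_zero.mpr hp)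
  have hderiv : ∀ x : ℝ, HasDerivAt (fun x => sin (x * π / p)) (cos (x * π / p) * (π / p)) x :=
    fun x => by simpa [mul_div_assoc] using ((hasDerivAt_id x).mul_const (π / p)).sin
  have hsimple : sin (n * π / p) = 0 → deriv (fun x : ℝ => sin (x * π / p)) n ≠ 0 := by
    intro h₀
    rw [(hderiv n).deriv]
    refine mul_ne_zero ?_ hc
    rcases sin_eq_zero_iff_cos_eq.mp h₀ with h | h <;> simp [h]
  classical
  obtain ⟨g, hg, hgn, hfg⟩ := exists_eq_pow_sub_mul_of_deriv_ne_zero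
    (f := fun x => sin (x * π / p)) (fun x => by fun_prop) (n : ℝ) hsimple
  refine ⟨g, hg, hgn, fun x => ?_⟩
  simpa only [sin_int_mul_pi_div_eq_zero_iff hp] using hfg x

open Classical in
theorem stmt_11_general (k : ℕ) (n : ℤ) (m : ℕ)
    (hm : m = ((Finset.range k).filter (fun i => (Nat.nth Nat.Prime i : ℤ) ∣ n)).card) :
    (∀ j < m, iteratedDeriv j
      (fun x : ℝ => ∏ i ∈ Finset.range k,
        Real.sin (x * Real.pi / (Nat.nth Nat.Prime i : ℝ))) (n : ℝ) = 0) ∧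
    iteratedDeriv m
      (fun x : ℝ => ∏ i ∈ Finset.range k,
        Real.sin (x * Real.pi / (Nat.nth Nat.Prime i : ℝ))) (n : ℝ) ≠ 0 := by
  choose g hg hgn hfg using fun i =>
    exists_sin_mul_pi_div_eq_pow_sub_mul (Nat.prime_nth_prime i).ne_zero n
  have hfactor : ∀ x : ℝ, ∏ i ∈ Finset.range k, sin (x * π / (Nat.nth Nat.Prime i : ℝ)) =
      (x - n) ^ m * ∏ i ∈ Finset.range k, g i x := by
    intro x
    rw [hm, Finset.card_filter, ← Finset.prod_pow_eq_pow_sum, ← Finset.prod_mul_distrib]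
    exact Finset.prod_congr rfl fun i _ => by rw [hfg i x]
  obtain ⟨hzero, hnonzero⟩ := iteratedDeriv_eq_zero_and_factorial_of_eq_pow_sub_mul
    (fun x => Finset.analyticAt_fun_prod _ fun i _ => hg i x) hfactor
  refine ⟨hzero, ?_⟩
  rw [hnonzero]
  exact mul_ne_zero (Nat.cast_ne_zero.mpr m.factorial_ne_zero)
    (Finset.prod_ne_zero_iff.mpr fun i _ => hgn i)

open Classical in
/-- Multiplicity of integer zeros of Pruitt functions: at an integer `n`, the k-th
Pruitt function `f_k` has a zero of order exactly `m`, where `m` is the number of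
indices `i` with `1 ≤ i ≤ k` such that `p_i ∣ n` (here `p_i = Nat.nth Nat.Prime (i-1)`,
so the indices run over `Finset.range k`). -/
theorem stmt_11 (k : ℕ) (hk : 0 < k) (n : ℤ) (m : ℕ)
    (hm : m = ((Finset.range k).filter (fun i => (Nat.nth Nat.Prime i : ℤ) ∣ n)).card) :
    (∀ j < m, iteratedDeriv j
      (fun x : ℝ => ∏ i ∈ Finset.range k,
        Real.sin (x * Real.pi / (Nat.nth Nat.Prime i : ℝ))) (n : ℝ) = 0) ∧
    iteratedDeriv m
      (fun x : ℝ => ∏ i ∈ Finset.range k,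
        Real.sin (x * Real.pi / (Nat.nth Nat.Prime i : ℝ))) (n : ℝ) ≠ 0 :=
  stmt_11_general k n m hm
end

section
/- Let f₃(x) = sin(xπ/2)·sin(xπ/3)·sin(xπ/5). Then the set of x in the interval [3/2, 25 + 1/3] with f₃(x) = 0 and f₃′(x) ≠ 0 (the simple zeros of f₃ in that interval) is exactly {2, 3, 4, 5, 8, 9, 14, 16, 21, 22, 25}. -/
/-!
Each factor `sin (x * π / a)` has only simple zeros, at the multiples of `a`. By the product
rule, a zero of a product of three such factors is simple exactly when only one factor
vanishes there. Hence the simple zeros of `pruitt3` are the integers divisible by exactly one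
of `2, 3, 5`, and it remains to list those in `[2, 25]`.
-/

noncomputable def pruitt3 : ℝ → ℝ := fun x =>
  Real.sin (x * Real.pi / 2) * Real.sin (x * Real.pi / 3) * Real.sin (x * Real.pi / 5)

open Real

def ExactlyOneOfThree (p q r : Prop) : Prop :=
  (p ∧ ¬q ∧ ¬r) ∨ (¬p ∧ q ∧ ¬r) ∨ (¬p ∧ ¬q ∧ r)

instance {p q r : Prop} [Decidable p] [Decidable q] [Decidable r] :
    Decidable (ExactlyOneOfThree p q r) := by
  unfold ExactlyOneOfThree; infer_instance

theorem mul_mul_eq_zero_and_add_ne_zero_iff {R : Type*} [CommRing R] [NoZeroDivisors R]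
    {a b c a' b' c' : R} (ha : a = 0 → a' ≠ 0) (hb : b = 0 → b' ≠ 0) (hc : c = 0 → c' ≠ 0) :
    a * b * c = 0 ∧ a' * b * c + a * b' * c + a * b * c' ≠ 0 ↔
      ExactlyOneOfThree (a = 0) (b = 0) (c = 0) := by
  unfold ExactlyOneOfThree
  by_cases a0 : a = 0 <;> by_cases b0 : b = 0 <;> by_cases c0 : c = 0 <;>
    simp [a0, b0, c0, ha, hb, hc]

theorem HasDerivAt.mul_mul_eq_zero_and_deriv_ne_zero_iff {𝕜 : Type*} [NontriviallyNormedField 𝕜]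
    {f g h : 𝕜 → 𝕜} {f' g' h' x : 𝕜}
    (hf : HasDerivAt f f' x) (hg : HasDerivAt g g' x) (hh : HasDerivAt h h' x)
    (hf0 : f x = 0 → f' ≠ 0) (hg0 : g x = 0 → g' ≠ 0) (hh0 : h x = 0 → h' ≠ 0) :
    f x * g x * h x = 0 ∧ _root_.deriv (fun y ↦ f y * g y * h y) x ≠ 0 ↔
      ExactlyOneOfThree (f x = 0) (g x = 0) (h x = 0) := by
  rw [((hf.fun_mul hg).fun_mul hh).deriv, add_mul]
  exact mul_mul_eq_zero_and_add_ne_zero_iff hf0 hg0 hh0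

theorem sin_mul_pi_div_eq_zero_iff {a : ℝ} (ha : a ≠ 0) {x : ℝ} :
    sin (x * π / a) = 0 ↔ ∃ k : ℤ, x = a * k := by
  rw [sin_eq_zero_iff]
  refine exists_congr fun k ↦ ?_
  rw [eq_div_iff ha, ← mul_left_inj' pi_ne_zero (a := x)]
  constructor <;> intro h <;> linarith

theorem sin_intCast_mul_pi_div_eq_zero_iff {a : ℤ} (ha : a ≠ 0) (n : ℤ) :
    sin (n * π / a) = 0 ↔ a ∣ n := by
  rw [sin_mul_pi_div_eq_zero_iff (Int.cast_ne_zero.2 ha)]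
  norm_cast

theorem hasDerivAt_sin_mul_pi_div (a x : ℝ) :
    HasDerivAt (fun y ↦ sin (y * π / a)) (cos (x * π / a) * (π / a)) x := by
  simpa using (((hasDerivAt_id x).mul_const π).div_const a).sin

theorem sin_mul_pi_div_simple_zero {a : ℝ} (ha : a ≠ 0) {x : ℝ} (h : sin (x * π / a) = 0) :
    cos (x * π / a) * (π / a) ≠ 0 := by
  have hcos : cos (x * π / a) ≠ 0 := fun hc ↦ by simpa [h, hc] using sin_sq_add_cos_sq (x * π / a)
  exact mul_ne_zero hcos (div_ne_zero pi_ne_zero ha)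

theorem pruitt3_eq_zero_and_deriv_ne_zero_iff (x : ℝ) :
    pruitt3 x = 0 ∧ deriv pruitt3 x ≠ 0 ↔
      ExactlyOneOfThree (sin (x * π / 2) = 0) (sin (x * π / 3) = 0) (sin (x * π / 5) = 0) :=
  HasDerivAt.mul_mul_eq_zero_and_deriv_ne_zero_iff
    (hasDerivAt_sin_mul_pi_div 2 x) (hasDerivAt_sin_mul_pi_div 3 x) (hasDerivAt_sin_mul_pi_div 5 x)
    (sin_mul_pi_div_simple_zero two_ne_zero) (sin_mul_pi_div_simple_zero three_ne_zero)
    (sin_mul_pi_div_simple_zero (by norm_num))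

theorem exists_intCast_eq_of_pruitt3_eq_zero {x : ℝ} (h : pruitt3 x = 0) : ∃ n : ℤ, x = n := by
  simp only [pruitt3, mul_eq_zero] at h
  obtain (h | h) | h := h <;> obtain ⟨k, rfl⟩ := (sin_mul_pi_div_eq_zero_iff (by norm_num)).1 h
  exacts [⟨2 * k, by push_cast; ring⟩, ⟨3 * k, by push_cast; ring⟩, ⟨5 * k, by push_cast; ring⟩]

theorem pruitt3_intCast_eq_zero_and_deriv_ne_zero_iff (n : ℤ) :
    pruitt3 n = 0 ∧ deriv pruitt3 n ≠ 0 ↔ ExactlyOneOfThree (2 ∣ n) (3 ∣ n) (5 ∣ n) := by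
  rw [pruitt3_eq_zero_and_deriv_ne_zero_iff]
  have hsin (a : ℤ) (ha : a ≠ 0) := sin_intCast_mul_pi_div_eq_zero_iff ha n
  rw [← hsin 2 two_ne_zero, ← hsin 3 three_ne_zero, ← hsin 5 (by norm_num)]
  push_cast
  rfl

theorem filter_Icc_exactlyOneOfThree_dvd :
    (Finset.Icc (2 : ℤ) 25).filter (fun n ↦ ExactlyOneOfThree (2 ∣ n) (3 ∣ n) (5 ∣ n)) =
      {2, 3, 4, 5, 8, 9, 14, 16, 21, 22, 25} := by
  decide

/-- Equation (3.3): the simple zeros of the third Pruitt function in `[3/2, 25 + 1/3]`. -/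
theorem stmt_13 :
    {x : ℝ | x ∈ Set.Icc (3 / 2 : ℝ) (25 + 1 / 3) ∧ pruitt3 x = 0 ∧ deriv pruitt3 x ≠ 0} =
    ({2, 3, 4, 5, 8, 9, 14, 16, 21, 22, 25} : Set ℝ) := by
  have hcast : ({2, 3, 4, 5, 8, 9, 14, 16, 21, 22, 25} : Set ℝ) =
      Int.cast '' ↑({2, 3, 4, 5, 8, 9, 14, 16, 21, 22, 25} : Finset ℤ) := by
    simp [Set.image_insert_eq]
  rw [hcast, ← filter_Icc_exactlyOneOfThree_dvd]
  ext x
  simp only [Set.mem_ofPred_eq, Set.mem_Icc, Set.mem_image, Finset.coe_filter, Finset.mem_Icc]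
  constructor
  · rintro ⟨⟨hlo, hhi⟩, hsimple⟩
    obtain ⟨n, rfl⟩ := exists_intCast_eq_of_pruitt3_eq_zero hsimple.1
    have h1 : 1 < n := by exact_mod_cast (by linarith : (1 : ℝ) < n)
    have h26 : n < 26 := by exact_mod_cast (by linarith : (n : ℝ) < 26)
    exact ⟨n, ⟨⟨by omega, by omega⟩,
      (pruitt3_intCast_eq_zero_and_deriv_ne_zero_iff n).1 hsimple⟩, rfl⟩
  · rintro ⟨n, ⟨⟨h2, h25⟩, hdvd⟩, rfl⟩
    have h2' : (2 : ℝ) ≤ n := by exact_mod_cast h2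
    have h25' : (n : ℝ) ≤ 25 := by exact_mod_cast h25
    exact ⟨⟨by linarith, by linarith⟩, (pruitt3_intCast_eq_zero_and_deriv_ne_zero_iff n).2 hdvd⟩
end
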